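/- arXiv:1907.07712 — 5 statements merged into one kernel-verified Lean document; each statement's English description precedes it below -/
import Mathlib

section
/- Let L be a supersolvable line arrangement over any field with a modular point p of multiplicity m. If q is a crossing point of multiplicity n ≥ m, then q is also modular. -/
open Projectivization

/-- The projective plane over `K`, with points (and, dually, lines) given by
projectivizing `K^3`. -/
abbrev PP (K : Type*) [Field K] := Projectivization K (Fin 3 → K)

/-- Incidence: the point `p` lies on the line `l` (given by dual coordinates):
the dot product of (any) homogeneous coordinates vanishes. -/
def incid {K : Type*} [Field K] (p l : PP K) : Prop :=
  dotProduct p.rep l.rep = 0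

/-- The multiplicity of a point `p` with respect to a line arrangement `L`:
the number of lines of `L` passing through `p`. -/
noncomputable def mult {K : Type*} [Field K] (L : Set (PP K)) (p : PP K) : ℕ :=
  {l ∈ L | incid p l}.ncard

/-- `p` is a crossing point of the arrangement `L`. -/
def crossing {K : Type*} [Field K] (L : Set (PP K)) (p : PP K) : Prop :=
  2 ≤ mult L p

/-- `p` is a modular point of `L`: a crossing point such that for every other
crossing point `q`, some line of `L` passes through both `p` and `q`. -/
def modular {K : Type*} [Field K] (L : Set (PP K)) (p : PP K) : Prop :=
  crossing L p ∧ ∀ q, crossing L q → q ≠ p → ∃ l ∈ L, incid p l ∧ incid q l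

/-- `t_k`: the number of crossing points of `L` of multiplicity exactly `k`. -/
noncomputable def tk {K : Type*} [Field K] (L : Set (PP K)) (k : ℕ) : ℕ :=
  {p | mult L p = k}.ncard

/-- A pencil: all lines pass through one common point. -/
def isPencil {K : Type*} [Field K] (L : Set (PP K)) : Prop :=
  ∃ p, ∀ l ∈ L, incid p l

/-- A near pencil: an arrangement of `s ≥ 3` lines, exactly `s - 1` of which
are concurrent. -/
def isNearPencil {K : Type*} [Field K] (L : Set (PP K)) : Prop :=
  3 ≤ L.ncard ∧ ∃ p, {l ∈ L | incid p l}.ncard + 1 = L.ncard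

/-!
Suppose `q` is not modular: some crossing point `r` is not joined to `q` by a line of
the arrangement. Take a line `g` of the arrangement through `r` that misses `p`. Joining `p` to the
crossing points on `g` gives distinct lines through `p`, so `g` carries at most `m` crossing points.
On the other hand each of the `n` lines through `q` meets `g` in a crossing point, these are
distinct, and none of them is `r`; so `g` carries at least `n + 1 > m` crossing points.
-/

open Set

section ProjectivePlane

variable {K : Type*} [Field K]

theorem incid_iff_orthogonal (x l : PP K) : incid x l ↔ x.orthogonal l := by
  conv_rhs => rw [← mk_rep x, ← mk_rep l]
  rfl

variable [DecidableEq K] {x y l : PP K}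

theorem incid_cross_left (h : x ≠ y) : incid x (cross x y) :=
  (incid_iff_orthogonal _ _).2 (orthogonal_cross_left h)

theorem incid_cross_right (h : x ≠ y) : incid y (cross x y) :=
  (incid_iff_orthogonal _ _).2 (orthogonal_cross_right h)

theorem cross_incid_left (h : x ≠ y) : incid (cross x y) x :=
  (incid_iff_orthogonal _ _).2 (cross_orthogonal_left h)

theorem cross_incid_right (h : x ≠ y) : incid (cross x y) y :=
  (incid_iff_orthogonal _ _).2 (cross_orthogonal_right h)

theorem eq_cross_of_incid (hxy : x ≠ y) (hx : incid x l) (hy : incid y l) : l = cross x y := by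
  induction x using Projectivization.ind with | h v hv =>
  induction y using Projectivization.ind with | h w hw =>
  induction l using Projectivization.ind with | h u hu =>
  rw [incid_iff_orthogonal, orthogonal_mk] at hx hy
  rw [cross_mk_of_ne hv hw hxy, mk_eq_mk_iff_crossProduct_eq_zero,
    cross_cross_eq_smul_sub_smul', dotProduct_comm u w, hx, hy, zero_smul, zero_smul, sub_zero]

end ProjectivePlane

theorem eq_of_incid_of_incid {K : Type*} [Field K] {x y l l' : PP K} (hxy : x ≠ y)
    (hxl : incid x l) (hyl : incid y l) (hxl' : incid x l') (hyl' : incid y l') : l = l' := by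
  classical
  rw [eq_cross_of_incid hxy hxl hyl, eq_cross_of_incid hxy hxl' hyl']

section Arrangement

variable {K : Type*} [Field K] {L : Set (PP K)}

def linesThrough (L : Set (PP K)) (x : PP K) : Set (PP K) :=
  {l ∈ L | incid x l}

def crossingsOn (L : Set (PP K)) (g : PP K) : Set (PP K) :=
  {x | crossing L x ∧ incid x g}

theorem ncard_linesThrough (x : PP K) : (linesThrough L x).ncard = mult L x :=
  rfl

theorem finite_linesThrough (hfin : L.Finite) (x : PP K) : (linesThrough L x).Finite :=
  hfin.subset (sep_subset _ _)

theorem finite_linesThrough_of_crossing {x : PP K} (hx : crossing L x) :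
    (linesThrough L x).Finite :=
  finite_of_ncard_pos (lt_of_lt_of_le two_pos hx)

theorem crossing_of_incid_of_incid (hfin : L.Finite) {x l l' : PP K} (hl : l ∈ L) (hl' : l' ∈ L)
    (hne : l ≠ l') (hxl : incid x l) (hxl' : incid x l') : crossing L x :=
  (one_lt_ncard (finite_linesThrough hfin x)).2 ⟨l, ⟨hl, hxl⟩, l', ⟨hl', hxl'⟩, hne⟩

theorem exists_mem_incid_not_incid_of_crossing {x y : PP K} (hx : crossing L x) (hxy : x ≠ y) :
    ∃ g ∈ L, incid x g ∧ ¬ incid y g := by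
  obtain ⟨l, ⟨hl, hxl⟩, l', ⟨hl', hxl'⟩, hne⟩ :=
    (one_lt_ncard (finite_linesThrough_of_crossing hx)).1 hx
  by_contra! h
  exact hne (eq_of_incid_of_incid hxy hxl (h l hl hxl) hxl' (h l' hl' hxl'))

/-- Joining the modular point `p` to the crossing points of a line `g` avoiding `p` is injective. -/
theorem encard_crossingsOn_le_mult {p g : PP K} (hp : modular L p) (hpg : ¬ incid p g) :
    (crossingsOn L g).encard ≤ mult L p := by
  classical
  have hne : ∀ x ∈ crossingsOn L g, p ≠ x := fun x hx hpx => hpg (hpx ▸ hx.2)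
  have hmaps : MapsTo (cross p) (crossingsOn L g) (linesThrough L p) := by
    intro x hx
    obtain ⟨l, hl, hpl, hxl⟩ := hp.2 x hx.1 (hne x hx).symm
    rw [← eq_cross_of_incid (hne x hx) hpl hxl]
    exact ⟨hl, hpl⟩
  have hinj : InjOn (cross p) (crossingsOn L g) := by
    intro x hx y hy hxy
    by_contra hxy'
    have hyx : incid y (cross p x) := hxy ▸ incid_cross_right (hne y hy)
    refine hpg ((eq_of_incid_of_incid hxy' (incid_cross_right (hne x hx)) hyx hx.2 hy.2) ▸ ?_)
    exact incid_cross_left (hne x hx)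
  rw [← ncard_linesThrough, (finite_linesThrough_of_crossing hp.1).cast_ncard_eq]
  exact encard_le_encard_of_injOn hmaps hinj

/-- The lines through `q` meet `g` in distinct crossing points, none of which is `r`. -/
theorem mult_add_one_le_encard_crossingsOn (hfin : L.Finite) {q r g : PP K} (hg : g ∈ L)
    (hqg : ¬ incid q g) (hr : r ∈ crossingsOn L g) (hqr : ∀ l ∈ L, incid q l → ¬ incid r l) :
    (mult L q : ℕ∞) + 1 ≤ (crossingsOn L g).encard := by
  classical
  set T := linesThrough L q
  have hne : ∀ h ∈ T, h ≠ g := fun h hh hhg => hqg (hhg ▸ hh.2)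
  have hmaps : MapsTo (cross · g) T (crossingsOn L g) := fun h hh =>
    ⟨crossing_of_incid_of_incid hfin hh.1 hg (hne h hh) (cross_incid_left (hne h hh))
      (cross_incid_right (hne h hh)), cross_incid_right (hne h hh)⟩
  have hinj : InjOn (cross · g) T := by
    intro h₁ hh₁ h₂ hh₂ heq
    have hq : q ≠ cross h₁ g := fun e => hqg (e ▸ cross_incid_right (hne h₁ hh₁))
    have heq : cross h₁ g = cross h₂ g := heq
    have hh₂' : incid (cross h₁ g) h₂ := heq ▸ cross_incid_left (hne h₂ hh₂)
    exact eq_of_incid_of_incid hq hh₁.2 (cross_incid_left (hne h₁ hh₁)) hh₂.2 hh₂'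
  have hr' : r ∉ (cross · g) '' T := by
    rintro ⟨h, hh, rfl⟩
    exact hqr h hh.1 hh.2 (cross_incid_left (hne h hh))
  calc (mult L q : ℕ∞) + 1 = (insert r ((cross · g) '' T)).encard := by
        rw [encard_insert_of_notMem hr', hinj.encard_image, ← ncard_linesThrough,
          (finite_linesThrough hfin q).cast_ncard_eq]
    _ ≤ (crossingsOn L g).encard := encard_le_encard (insert_subset hr hmaps.image_subset)

end Arrangement

/-- if p is modular of multiplicity m and q is a crossing point of
multiplicity n ≥ m, then q is modular. -/
theorem crossing_of_ge_mult_is_modular {K : Type*} [Field K] (L : Set (PP K))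
    (hfin : L.Finite) (p q : PP K) (m n : ℕ)
    (hp : modular L p) (hpm : mult L p = m)
    (hq : crossing L q) (hqn : mult L q = n) (hmn : m ≤ n) :
    modular L q := by
  obtain rfl | hqp := eq_or_ne q p
  · exact hp
  refine ⟨hq, fun r hr _ => ?_⟩
  by_contra! hqr
  have hrp : r ≠ p := by
    rintro rfl
    obtain ⟨l, hl, hrl, hql⟩ := hp.2 q hq hqp
    exact hqr l hl hql hrl
  obtain ⟨g, hg, hrg, hpg⟩ := exists_mem_incid_not_incid_of_crossing hr hrp
  have hqg : ¬ incid q g := fun hqg => hqr g hg hqg hrg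
  have hcount : (n : ℕ∞) + 1 ≤ m := by
    rw [← hpm, ← hqn]
    exact (mult_add_one_le_encard_crossingsOn hfin hg hqg ⟨hr, hrg⟩ hqr).trans
      (encard_crossingsOn_le_mult hp hpg)
  norm_cast at hcount
  omega
end

section
/- In an m-homogeneous supersolvable complex line arrangement with m ≥ 3, no three modular points are collinear. -/
/-!
Let `l` be the common line of the three modular points `p, q, r`; it belongs to `L` because `p`
is modular. Fix a
vector `e` off `l`. For `P ∈ l`, the lines through `P` other than `l` are `P × e - a • l`,
`a ∈ K`, and such a line passes through a point `x ∉ l` exactly when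
`a = x ⬝ (P × e) / x ⬝ l`, which is linear in `P`. Write `r = α p + β q`. Lines of `L` through
`p` and `q` with parameters `a` and `b` meet in a crossing point `x ∉ l`; modularity of `r` puts
the line `r x` in `L`, and its parameter is `α a + β b`. So the parameter sets of the three
pencils, of sizes `m - 1`, satisfy `α A + β B ⊆ C`, and Cauchy–Davenport in the torsion-free
group `(ℂ, +)` gives `2 (m - 1) - 1 ≤ m - 1`, i.e. `m ≤ 2`.
-/

open Projectivization

open Matrix

section LinearAlgebra

variable {K : Type*} [Field K]

theorem linearIndependent_pair_of_dotProduct {ι : Type*} [Fintype ι] {x y n : ι → K}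
    (hx : x ≠ 0) (hxn : x ⬝ᵥ n = 0) (hyn : y ⬝ᵥ n ≠ 0) : LinearIndependent K ![x, y] := by
  refine (LinearIndependent.pair_iff' hx).2 fun a hax => hyn ?_
  rw [← hax, smul_dotProduct, hxn, smul_zero]

theorem exists_eq_smul_cross_of_dotProduct_eq_zero {u v w : Fin 3 → K}
    (huv : LinearIndependent K ![u, v]) (hwu : w ⬝ᵥ u = 0) (hwv : w ⬝ᵥ v = 0) :
    ∃ k : K, w = k • u ⨯₃ v := by
  have hn : u ⨯₃ v ≠ 0 := crossProduct_ne_zero_iff_linearIndependent.2 huv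
  have hdep : ¬ LinearIndependent K ![u ⨯₃ v, w] := by
    rw [← crossProduct_ne_zero_iff_linearIndependent, not_not, ← cross_anticomm,
      cross_cross_eq_smul_sub_smul', hwv, dotProduct_comm, hwu, zero_smul, zero_smul, sub_zero,
      neg_zero]
  rw [LinearIndependent.pair_iff' hn] at hdep
  push Not at hdep
  obtain ⟨k, hk⟩ := hdep
  exact ⟨k, hk.symm⟩

theorem exists_eq_smul_add_smul_of_dotProduct_cross_eq_zero {u v z : Fin 3 → K}
    (huv : LinearIndependent K ![u, v]) (hz : z ⬝ᵥ u ⨯₃ v = 0) :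
    ∃ a b : K, z = a • u + b • v := by
  have hdep : ¬ LinearIndependent K (Fin.cons z ![u, v] : Fin 3 → Fin 3 → K) := by
    have h := (linearIndependent_rows_iff_isUnit (A := Matrix.of ![z, u, v])).not.2
    rw [isUnit_iff_isUnit_det, isUnit_iff_ne_zero, not_not] at h
    exact h ((triple_product_eq_det z u v).symm.trans hz)
  rw [linearIndependent_finCons, not_and, not_not, range_cons_cons_empty] at hdep
  obtain ⟨a, b, hab⟩ := Submodule.mem_span_pair.1 (hdep huv)
  exact ⟨a, b, hab.symm⟩

end LinearAlgebra

section PairIndependent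

variable {K V : Type*} [Field K] [AddCommGroup V] [Module K V] {u w : V}
  (h : LinearIndependent K ![u, w])
include h

theorem sub_smul_ne_zero_of_linearIndependent (a : K) : u - a • w ≠ 0 := fun h0 =>
  one_ne_zero (LinearIndependent.pair_iff.1 h 1 (-a) (by
    rw [one_smul, neg_smul, ← sub_eq_add_neg, h0])).1

theorem smul_ne_sub_smul_of_linearIndependent (a k : K) : k • w ≠ u - a • w := fun h0 =>
  one_ne_zero (LinearIndependent.pair_iff.1 h 1 (-a - k) (by
    linear_combination (norm := module) -h0)).1

theorem eq_of_smul_sub_smul_eq_sub_smul {a a' k : K} (h0 : k • (u - a' • w) = u - a • w) :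
    a = a' := by
  obtain ⟨h1, h2⟩ := LinearIndependent.pair_iff.1 h (k - 1) (a - k * a') (by
    linear_combination (norm := module) h0)
  linear_combination h2 + a' * h1

end PairIndependent

section ProjectivePlane

variable {K : Type*} [Field K] {p q r x l l' : PP K}

theorem incid_comm : incid p l ↔ incid l p := by
  rw [incid, incid, dotProduct_comm]

theorem incid_mk_iff {v : Fin 3 → K} (hv : v ≠ 0) : incid p (mk K v hv) ↔ p.rep ⬝ᵥ v = 0 := by
  obtain ⟨a, ha⟩ := exists_smul_eq_mk_rep K v hv
  rw [incid, ← ha, Units.smul_def, dotProduct_smul, smul_eq_mul, mul_eq_zero,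
    or_iff_right a.ne_zero]

theorem eq_of_rep_eq_smul {a : K} (h : p.rep = a • q.rep) : p = q := by
  rw [← mk_rep p, ← mk_rep q, mk_eq_mk_iff']
  exact ⟨a, h.symm⟩

theorem linearIndependent_rep_pair (hpq : p ≠ q) : LinearIndependent K ![p.rep, q.rep] := by
  have h := independent_iff.1 ((independent_pair_iff_ne p q).2 hpq)
  rwa [← FinVec.map_eq] at h

theorem line_eq_of_incid (hpq : p ≠ q) (hpl : incid p l) (hql : incid q l)
    (hpl' : incid p l') (hql' : incid q l') : l = l' := by
  have hpq := linearIndependent_rep_pair hpq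
  obtain ⟨k, hk⟩ := exists_eq_smul_cross_of_dotProduct_eq_zero hpq
    (incid_comm.1 hpl) (incid_comm.1 hql)
  obtain ⟨k', hk'⟩ := exists_eq_smul_cross_of_dotProduct_eq_zero hpq
    (incid_comm.1 hpl') (incid_comm.1 hql')
  have hk'0 : k' ≠ 0 := by rintro rfl; exact l'.rep_nonzero (by simpa using hk')
  exact eq_of_rep_eq_smul (a := k / k') (by rw [hk, hk', smul_smul, div_mul_cancel₀ _ hk'0])

theorem point_eq_of_incid (hll' : l ≠ l') (hpl : incid p l) (hpl' : incid p l')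
    (hql : incid q l) (hql' : incid q l') : p = q :=
  line_eq_of_incid hll' (incid_comm.1 hpl) (incid_comm.1 hpl') (incid_comm.1 hql)
    (incid_comm.1 hql')

theorem exists_incid_incid (hll' : l ≠ l') : ∃ x, incid x l ∧ incid x l' := by
  have hx := crossProduct_ne_zero_iff_linearIndependent.2 (linearIndependent_rep_pair hll')
  exact ⟨mk K _ hx, incid_comm.2 ((incid_mk_iff hx).2 (dot_self_cross _ _)),
    incid_comm.2 ((incid_mk_iff hx).2 (dot_cross_self _ _))⟩

theorem crossing_of_incid {L : Set (PP K)} (hL : L.Finite) (hl : l ∈ L) (hl' : l' ∈ L)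
    (hll' : l ≠ l') (hxl : incid x l) (hxl' : incid x l') : crossing L x :=
  (Set.one_lt_ncard (hL.subset (Set.sep_subset _ _))).2 ⟨l, ⟨hl, hxl⟩, l', ⟨hl', hxl'⟩, hll'⟩

theorem exists_rep_eq_smul_add_smul (hpq : p ≠ q) (hpl : incid p l) (hql : incid q l)
    (hrl : incid r l) : ∃ α β : K, r.rep = α • p.rep + β • q.rep := by
  have hpq := linearIndependent_rep_pair hpq
  obtain ⟨k, hk⟩ := exists_eq_smul_cross_of_dotProduct_eq_zero hpq
    (incid_comm.1 hpl) (incid_comm.1 hql)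
  have hk0 : k ≠ 0 := by rintro rfl; exact l.rep_nonzero (by simpa using hk)
  refine exists_eq_smul_add_smul_of_dotProduct_cross_eq_zero hpq ?_
  have hrl : r.rep ⬝ᵥ l.rep = 0 := hrl
  rwa [hk, dotProduct_smul, smul_eq_mul, mul_eq_zero, or_iff_right hk0] at hrl

end ProjectivePlane

section Pencil

variable {K : Type*} [Field K] {l P x : PP K} {e : Fin 3 → K}

theorem linearIndependent_cross_rep (he : e ⬝ᵥ l.rep ≠ 0) (hP : incid P l) :
    LinearIndependent K ![P.rep ⨯₃ e, l.rep] := by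
  have hPe : LinearIndependent K ![P.rep, e] :=
    linearIndependent_pair_of_dotProduct P.rep_nonzero hP he
  refine linearIndependent_pair_of_dotProduct (n := e)
    (crossProduct_ne_zero_iff_linearIndependent.2 hPe) ?_ ?_
  · rw [dotProduct_comm, dot_cross_self]
  · rwa [dotProduct_comm]

noncomputable def pencil (he : e ⬝ᵥ l.rep ≠ 0) (hP : incid P l) (a : K) : PP K :=
  mk K (P.rep ⨯₃ e - a • l.rep) <| by
    have hli := linearIndependent_cross_rep he hP
    exact sub_smul_ne_zero_of_linearIndependent hli a

noncomputable def pencilParam (e : Fin 3 → K) (l x : PP K) (u : Fin 3 → K) : K :=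
  x.rep ⬝ᵥ u ⨯₃ e / x.rep ⬝ᵥ l.rep

theorem pencilParam_smul_add_smul (α β : K) (u v : Fin 3 → K) :
    pencilParam e l x (α • u + β • v) = α * pencilParam e l x u + β * pencilParam e l x v := by
  simp only [pencilParam, map_add, map_smul, LinearMap.add_apply, LinearMap.smul_apply,
    dotProduct_add, dotProduct_smul, smul_eq_mul, add_div, mul_div_assoc]

variable (he : e ⬝ᵥ l.rep ≠ 0) (hP : incid P l)
include he hP

theorem incid_pencil (a : K) : incid P (pencil he hP a) := by
  rw [pencil, incid_mk_iff, dotProduct_sub, dot_self_cross, dotProduct_smul]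
  simp [show P.rep ⬝ᵥ l.rep = 0 from hP]

theorem pencil_ne (a : K) : pencil he hP a ≠ l := by
  intro h
  obtain ⟨k, hk⟩ := (mk_eq_mk_iff' K _ _ _ l.rep_nonzero).1 (h.trans (mk_rep l).symm)
  have hli := linearIndependent_cross_rep he hP
  exact smul_ne_sub_smul_of_linearIndependent hli a k hk

theorem pencil_injective : Function.Injective (pencil he hP) := by
  intro a a' h
  obtain ⟨k, hk⟩ := (mk_eq_mk_iff' K _ _ _ _).1 h
  have hli := linearIndependent_cross_rep he hP
  exact eq_of_smul_sub_smul_eq_sub_smul hli hk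

theorem range_pencil : Set.range (pencil he hP) = {l' | incid P l'} \ {l} := by
  ext l'
  constructor
  · rintro ⟨a, rfl⟩
    exact ⟨incid_pencil he hP a, pencil_ne he hP a⟩
  rintro ⟨hPl' : incid P l', hl'l : l' ≠ l⟩
  obtain ⟨s, t, hst⟩ := exists_eq_smul_add_smul_of_dotProduct_cross_eq_zero
    (linearIndependent_cross_rep he hP) (z := l'.rep) (by
      rw [cross_cross_eq_smul_sub_smul, show P.rep ⬝ᵥ l.rep = 0 from hP, dotProduct_sub,
        dotProduct_smul, dotProduct_smul,
        show l'.rep ⬝ᵥ P.rep = 0 from incid_comm.1 hPl']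
      simp)
  have hs : s ≠ 0 := by
    rintro rfl
    exact hl'l (eq_of_rep_eq_smul (a := t) (by simpa using hst))
  refine ⟨-t / s, ((mk_eq_mk_iff' K _ _ _ l'.rep_nonzero).2 ⟨s⁻¹, ?_⟩).trans (mk_rep l')⟩
  rw [hst]
  match_scalars <;> field_simp

theorem incid_pencil_iff (hx : ¬ incid x l) (a : K) :
    incid x (pencil he hP a) ↔ a = pencilParam e l x P.rep := by
  rw [pencil, incid_mk_iff, dotProduct_sub, dotProduct_smul, smul_eq_mul, sub_eq_zero,
    pencilParam, eq_div_iff hx, eq_comm]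

theorem ncard_preimage_pencil_add_one {L : Set (PP K)} (hL : L.Finite) (hl : l ∈ L) :
    (pencil he hP ⁻¹' L).ncard + 1 = mult L P := by
  rw [← Set.ncard_image_of_injective _ (pencil_injective he hP), Set.image_preimage_eq_inter_range,
    range_pencil, ← Set.inter_sdiff_assoc]
  exact Set.ncard_sdiff_singleton_add_one ⟨hl, hP⟩ (hL.subset Set.inter_subset_left)

end Pencil

open Pointwise in
theorem ncard_add_ncard_le_of_smul_add_smul_subset {K : Type*} [Field K] [CharZero K]
    {A B C : Set K} (hA : A.Finite) (hB : B.Finite) (hC : C.Finite) (hA₀ : A.Nonempty)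
    (hB₀ : B.Nonempty) {α β : K} (hα : α ≠ 0) (hβ : β ≠ 0) (h : α • A + β • B ⊆ C) :
    A.ncard + B.ncard ≤ C.ncard + 1 := by
  classical
  lift A to Finset K using hA
  lift B to Finset K using hB
  lift C to Finset K using hC
  have hsub : α • A + β • B ⊆ C := by
    rw [← Finset.coe_subset]
    push_cast
    exact h
  have hCD := cauchy_davenport_of_isAddTorsionFree
    ((Finset.coe_nonempty.1 hA₀).smul_finset (a := α))
    ((Finset.coe_nonempty.1 hB₀).smul_finset (a := β))
  rw [Finset.card_smul_finset₀ hα, Finset.card_smul_finset₀ hβ] at hCD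
  simp only [Set.ncard_coe_finset]
  have := Finset.card_le_card hsub
  omega

section Modular

variable {K : Type*} [Field K] {L : Set (PP K)} {l p q r : PP K}

open Pointwise in
theorem smul_add_smul_subset_preimage_pencil (hL : L.Finite) {e : Fin 3 → K}
    (he : e ⬝ᵥ l.rep ≠ 0) (hpl : incid p l) (hql : incid q l) (hrl : incid r l) (hpq : p ≠ q)
    (hr : modular L r) {α β : K} (hαβ : r.rep = α • p.rep + β • q.rep) :
    α • (pencil he hpl ⁻¹' L) + β • (pencil he hql ⁻¹' L) ⊆ pencil he hrl ⁻¹' L := by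
  rintro _ ⟨_, ⟨a, ha, rfl⟩, _, ⟨b, hb, rfl⟩, rfl⟩
  have hne : pencil he hpl a ≠ pencil he hql b := fun h =>
    pencil_ne he hpl a (line_eq_of_incid hpq (incid_pencil he hpl a)
      (h ▸ incid_pencil he hql b) hpl hql)
  obtain ⟨x, hxa, hxb⟩ := exists_incid_incid hne
  have hxl : ¬ incid x l := fun hxl =>
    hpq <| (point_eq_of_incid (pencil_ne he hpl a) hxa hxl (incid_pencil he hpl a) hpl).symm.trans
      (point_eq_of_incid (pencil_ne he hql b) hxb hxl (incid_pencil he hql b) hql)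
  obtain ⟨l', hl'L, hrl', hxl'⟩ :=
    hr.2 x (crossing_of_incid hL ha hb hne hxa hxb) fun h => hxl (h ▸ hrl)
  obtain ⟨c, rfl⟩ : l' ∈ Set.range (pencil he hrl) := by
    rw [range_pencil]
    exact ⟨hrl', fun h => hxl (h ▸ hxl')⟩
  rw [incid_pencil_iff he hpl hxl] at hxa
  rw [incid_pencil_iff he hql hxl] at hxb
  rw [incid_pencil_iff he hrl hxl, hαβ, pencilParam_smul_add_smul] at hxl'
  change pencil he hrl (α * a + β * b) ∈ L
  rwa [hxa, hxb, ← hxl']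

theorem mult_add_mult_le_of_modular [CharZero K] (hL : L.Finite) (hl : l ∈ L)
    (hpl : incid p l) (hql : incid q l) (hrl : incid r l) (hpq : p ≠ q) (hpr : p ≠ r)
    (hqr : q ≠ r) (hp : crossing L p) (hq : crossing L q) (hr : modular L r) :
    mult L p + mult L q ≤ mult L r + 2 := by
  obtain ⟨i, hi⟩ := Function.ne_iff.1 l.rep_nonzero
  have he : Pi.single i 1 ⬝ᵥ l.rep ≠ 0 := by rwa [single_dotProduct, one_mul]
  obtain ⟨α, β, hαβ⟩ := exists_rep_eq_smul_add_smul hpq hpl hql hrl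
  have hα : α ≠ 0 := by
    rintro rfl
    exact hqr (eq_of_rep_eq_smul (by simpa using hαβ)).symm
  have hβ : β ≠ 0 := by
    rintro rfl
    exact hpr (eq_of_rep_eq_smul (by simpa using hαβ)).symm
  have hfin {P : PP K} (hP : incid P l) : (pencil he hP ⁻¹' L).Finite :=
    hL.preimage (pencil_injective he hP).injOn
  have hcard {P : PP K} (hP : incid P l) := ncard_preimage_pencil_add_one he hP hL hl
  have hne {P : PP K} (hP : incid P l) (hc : crossing L P) : (pencil he hP ⁻¹' L).Nonempty :=
    Set.nonempty_of_ncard_ne_zero (by have := hcard hP; unfold crossing at hc; omega)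
  have hCD := ncard_add_ncard_le_of_smul_add_smul_subset (hfin hpl) (hfin hql) (hfin hrl)
    (hne hpl hp) (hne hql hq) hα hβ
    (smul_add_smul_subset_preimage_pencil hL he hpl hql hrl hpq hr hαβ)
  have hp' := hcard hpl
  have hq' := hcard hql
  have hr' := hcard hrl
  omega

end Modular

theorem no_three_modular_collinear_general (L : Set (PP ℂ)) (hfin : L.Finite) (m : ℕ)
    (hm : 3 ≤ m) (hhomog : ∀ p, modular L p → mult L p = m) :
    ∀ p q r : PP ℂ, modular L p → modular L q → modular L r →
      p ≠ q → p ≠ r → q ≠ r →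
      ¬ ∃ l : PP ℂ, incid p l ∧ incid q l ∧ incid r l := by
  rintro p q r hp hq hr hpq hpr hqr ⟨l, hpl, hql, hrl⟩
  obtain ⟨l', hl'L, hpl', hql'⟩ := hp.2 q hq.1 (Ne.symm hpq)
  obtain rfl := line_eq_of_incid hpq hpl' hql' hpl hql
  have := mult_add_mult_le_of_modular hfin hl'L hpl hql hrl hpq hpr hqr hp.1 hq.1 hr
  rw [hhomog p hp, hhomog q hq, hhomog r hr] at this
  omega

/-- in an m-homogeneous supersolvable complex line arrangement with
m ≥ 3, no three modular points are collinear. -/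
theorem no_three_modular_collinear (L : Set (PP ℂ)) (hfin : L.Finite) (m : ℕ)
    (hm : 3 ≤ m) (hss : ∃ p, modular L p)
    (hhomog : ∀ p, modular L p → mult L p = m) :
    ∀ p q r : PP ℂ, modular L p → modular L q → modular L r →
      p ≠ q → p ≠ r → q ≠ r →
      ¬ ∃ l : PP ℂ, incid p l ∧ incid q l ∧ incid r l :=
  no_three_modular_collinear_general L hfin m hm hhomog
end

section
/- Let L be a line arrangement (over any field), let m be the maximum multiplicity of its crossing points, and let n be the total number of crossing points. If n < 2m, then L is either a pencil or a near pencil. -/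
open Projectivization

/-!
Let `p` be a crossing point of multiplicity `m`. A line `l` missing `p` meets the `m` lines
through `p` in `m` distinct crossing points, and two such lines share at most one point. So if
two lines of `L` missed `p`, there would be at least `1 + (2m - 1) = 2m` crossing points;
hence at most one line misses `p`, and `L` is a pencil or a near pencil. The intersection point
of two distinct lines is their projective cross product.
-/

namespace Projectivization

open scoped LinearAlgebra.Projectivization

variable {F : Type*} [Field F] [DecidableEq F]

lemma eq_cross_of_orthogonal {u v w : ℙ F (Fin 3 → F)} (huv : u ≠ v)
    (hu : w.orthogonal u) (hv : w.orthogonal v) : w = cross u v := by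
  induction u with | h u hu0 =>
  induction v with | h v hv0 =>
  induction w with | h w hw0 =>
  rw [orthogonal_mk] at hu hv
  rw [cross_mk_of_ne hu0 hv0 huv, mk_eq_mk_iff_crossProduct_eq_zero,
    cross_cross_eq_smul_sub_smul', hv, dotProduct_comm, hu, zero_smul, zero_smul, sub_zero]

end Projectivization

section Incidence

variable {K : Type*} [Field K] {p q l l₁ l₂ : PP K}

lemma incid_iff_orthogonal_s10 : incid p l ↔ p.orthogonal l := by
  conv_rhs => rw [← mk_rep p, ← mk_rep l]
  exact (orthogonal_mk _ _).symm

lemma eq_of_incid_of_incid_s10 (hpq : p ≠ q) (hp₁ : incid p l₁) (hq₁ : incid q l₁)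
    (hp₂ : incid p l₂) (hq₂ : incid q l₂) : l₁ = l₂ := by
  classical
  have on_cross : ∀ l, incid p l → incid q l → l = cross p q := fun l hp hq =>
    eq_cross_of_orthogonal hpq (orthogonal_comm.1 (incid_iff_orthogonal_s10.1 hp))
      (orthogonal_comm.1 (incid_iff_orthogonal_s10.1 hq))
  rw [on_cross l₁ hp₁ hq₁, on_cross l₂ hp₂ hq₂]

variable [DecidableEq K]

lemma incid_cross_left_s10 (h : l₁ ≠ l₂) : incid (cross l₁ l₂) l₁ :=
  incid_iff_orthogonal_s10.2 (cross_orthogonal_left h)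

lemma incid_cross_right_s10 (h : l₁ ≠ l₂) : incid (cross l₁ l₂) l₂ :=
  incid_iff_orthogonal_s10.2 (cross_orthogonal_right h)

lemma eq_cross_of_incid_s10 (h : l₁ ≠ l₂) (h₁ : incid p l₁) (h₂ : incid p l₂) : p = cross l₁ l₂ :=
  eq_cross_of_orthogonal h (incid_iff_orthogonal_s10.1 h₁) (incid_iff_orthogonal_s10.1 h₂)

end Incidence

section Crossings

variable {K : Type*} [Field K] {L : Set (PP K)} {p l l₁ l₂ : PP K}

lemma crossing_iff (hL : L.Finite) :
    crossing L p ↔ ∃ l₁ ∈ L, ∃ l₂ ∈ L, l₁ ≠ l₂ ∧ incid p l₁ ∧ incid p l₂ := by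
  change 1 < {l ∈ L | incid p l}.ncard ↔ _
  rw [Set.one_lt_ncard (hL.subset (Set.sep_subset _ _))]
  constructor
  · rintro ⟨l₁, ⟨h₁, hp₁⟩, l₂, ⟨h₂, hp₂⟩, hne⟩
    exact ⟨l₁, h₁, l₂, h₂, hne, hp₁, hp₂⟩
  · rintro ⟨l₁, h₁, l₂, h₂, hne, hp₁, hp₂⟩
    exact ⟨l₁, ⟨h₁, hp₁⟩, l₂, ⟨h₂, hp₂⟩, hne⟩

lemma crossing_of_incid_s10 (hL : L.Finite) (h₁ : l₁ ∈ L) (h₂ : l₂ ∈ L) (hne : l₁ ≠ l₂)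
    (hp₁ : incid p l₁) (hp₂ : incid p l₂) : crossing L p :=
  (crossing_iff hL).2 ⟨l₁, h₁, l₂, h₂, hne, hp₁, hp₂⟩

lemma finite_setOf_crossing (hL : L.Finite) : {p | crossing L p}.Finite := by
  classical
  refine ((hL.prod hL).image fun l : PP K × PP K => cross l.1 l.2).subset fun p hp => ?_
  obtain ⟨l₁, h₁, l₂, h₂, hne, hp₁, hp₂⟩ := (crossing_iff hL).1 hp
  exact ⟨(l₁, l₂), ⟨h₁, h₂⟩, (eq_cross_of_incid_s10 hne hp₁ hp₂).symm⟩

lemma mult_le_ncard_crossing_incid (hL : L.Finite) (hl : l ∈ L) (hp : ¬ incid p l) :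
    mult L p ≤ {q | crossing L q ∧ incid q l}.ncard := by
  classical
  have ne_of_incid : ∀ l', incid p l' → l' ≠ l := fun l' hp' h => hp (h ▸ hp')
  refine Set.ncard_le_ncard_of_injOn (fun l' => cross l' l) ?_ ?_
    ((finite_setOf_crossing hL).subset fun q hq => hq.1)
  · rintro l' ⟨hl', hp'⟩
    have hne := ne_of_incid l' hp'
    exact ⟨crossing_of_incid_s10 hL hl' hl hne (incid_cross_left_s10 hne) (incid_cross_right_s10 hne),
      incid_cross_right_s10 hne⟩
  · rintro l₁ ⟨-, hp₁⟩ l₂ ⟨-, hp₂⟩ heq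
    have hne₁ := ne_of_incid l₁ hp₁
    have hne₂ := ne_of_incid l₂ hp₂
    have hpq : p ≠ cross l₁ l := fun h => hp (h ▸ incid_cross_right_s10 hne₁)
    refine eq_of_incid_of_incid_s10 hpq hp₁ (incid_cross_left_s10 hne₁) hp₂ ?_
    rw [show cross l₁ l = cross l₂ l from heq]
    exact incid_cross_left_s10 hne₂

lemma two_mul_mult_le_ncard_crossing (hL : L.Finite) (hp : crossing L p) (h₁ : l₁ ∈ L)
    (h₂ : l₂ ∈ L) (hne : l₁ ≠ l₂) (hp₁ : ¬ incid p l₁) (hp₂ : ¬ incid p l₂) :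
    2 * mult L p ≤ {q | crossing L q}.ncard := by
  classical
  set S₁ := {q | crossing L q ∧ incid q l₁}
  set S₂ := {q | crossing L q ∧ incid q l₂}
  have hS₁ : S₁.Finite := (finite_setOf_crossing hL).subset fun q hq => hq.1
  have hS₂ : S₂.Finite := (finite_setOf_crossing hL).subset fun q hq => hq.1
  have hinter : (S₁ ∩ S₂).ncard ≤ 1 := by
    refine (Set.ncard_le_ncard (t := {cross l₁ l₂}) ?_).trans (Set.ncard_singleton _).le
    exact fun q hq => eq_cross_of_incid_s10 hne hq.1.2 hq.2.2
  have hunion := Set.ncard_union_add_ncard_inter S₁ S₂ hS₁ hS₂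
  have hp_notMem : p ∉ S₁ ∪ S₂ := by
    rintro (⟨-, h⟩ | ⟨-, h⟩)
    exacts [hp₁ h, hp₂ h]
  have hsub : insert p (S₁ ∪ S₂) ⊆ {q | crossing L q} := by
    rintro q (rfl | ⟨hq, -⟩ | ⟨hq, -⟩) <;> assumption
  have hcard := Set.ncard_le_ncard hsub (finite_setOf_crossing hL)
  rw [Set.ncard_insert_of_notMem hp_notMem (hS₁.union hS₂)] at hcard
  have hmult₁ : mult L p ≤ S₁.ncard := mult_le_ncard_crossing_incid hL h₁ hp₁
  have hmult₂ : mult L p ≤ S₂.ncard := mult_le_ncard_crossing_incid hL h₂ hp₂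
  omega

lemma isPencil_or_isNearPencil_of_subsingleton (hL : L.Finite) (hp : crossing L p)
    (h : {l ∈ L | ¬ incid p l}.Subsingleton) : isPencil L ∨ isNearPencil L := by
  rcases h.eq_empty_or_singleton with h | ⟨l, h⟩
  · exact .inl ⟨p, fun l hl => by_contra fun hpl => h.subset ⟨hl, hpl⟩⟩
  · have hcard : {l ∈ L | incid p l}.ncard + 1 = L.ncard := by
      rw [← Set.ncard_singleton l, ← h]
      exact Set.ncard_inter_add_ncard_sdiff_eq_ncard L {l | incid p l} hL
    exact .inr ⟨by unfold crossing mult at hp; omega, p, hcard⟩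

end Crossings

theorem pencil_or_near_pencil_of_few_crossings_general {K : Type*} [Field K]
    (L : Set (PP K)) (hfin : L.Finite) (m : ℕ)
    (hmax : ∃ p, crossing L p ∧ mult L p = m)
    (hn : {p | crossing L p}.ncard < 2 * m) :
    isPencil L ∨ isNearPencil L := by
  obtain ⟨p, hp, rfl⟩ := hmax
  refine isPencil_or_isNearPencil_of_subsingleton hfin hp fun l₁ h₁ l₂ h₂ => ?_
  by_contra hne
  exact hn.not_ge (two_mul_mult_le_ncard_crossing hfin hp h₁.1 h₂.1 hne h₁.2 h₂.2)

/-- if the number n of crossing points satisfies n < 2m, where m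
is the maximal multiplicity of a crossing point, then L is a pencil or a near
pencil. -/
theorem pencil_or_near_pencil_of_few_crossings {K : Type*} [Field K]
    (L : Set (PP K)) (hfin : L.Finite) (hs : 2 ≤ L.ncard) (m : ℕ)
    (hmax : ∃ p, crossing L p ∧ mult L p = m)
    (hle : ∀ p, crossing L p → mult L p ≤ m)
    (hn : {p | crossing L p}.ncard < 2 * m) :
    isPencil L ∨ isNearPencil L :=
  pencil_or_near_pencil_of_few_crossings_general L hfin m hmax hn
end

section
/- If two distinct lines of a supersolvable arrangement, neither passing through a given modular point p, meet at a crossing point of multiplicity 2, then a contradiction follows; hence the crossing points of multiplicity 2 on the lines not through p are pairwise distinct (each lies on exactly one line avoiding p). -/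
open Projectivization

theorem eq_or_eq_of_mult_eq_two {K : Type*} [Field K] {L : Set (PP K)} {q l₁ l₂ l : PP K}
    (hq : mult L q = 2) (hl₁ : l₁ ∈ L) (hl₂ : l₂ ∈ L) (hne : l₁ ≠ l₂)
    (hq₁ : incid q l₁) (hq₂ : incid q l₂) (hl : l ∈ L) (hql : incid q l) :
    l = l₁ ∨ l = l₂ := by
  have hpair : ({l₁, l₂} : Set (PP K)) = {m ∈ L | incid q m} :=
    Set.eq_of_subset_of_ncard_le (Set.pair_subset ⟨hl₁, hq₁⟩ ⟨hl₂, hq₂⟩)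
      (by rw [← mult, hq, Set.ncard_pair hne])
      (Set.finite_of_ncard_ne_zero (by rw [← mult, hq]; norm_num))
  have hmem : l ∈ ({l₁, l₂} : Set (PP K)) := hpair ▸ ⟨hl, hql⟩
  simpa only [Set.mem_insert_iff, Set.mem_singleton_iff] using hmem

/-- two distinct lines of the arrangement avoiding a modular point
p cannot meet at a crossing point of multiplicity 2; hence the double points on
the lines missing p are pairwise distinct. -/
theorem double_points_distinct {K : Type*} [Field K] (L : Set (PP K))
    (p : PP K) (hp : modular L p) (l₁ l₂ : PP K)
    (hl₁ : l₁ ∈ L) (hl₂ : l₂ ∈ L) (hne : l₁ ≠ l₂)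
    (hpl₁ : ¬ incid p l₁) (hpl₂ : ¬ incid p l₂)
    (q : PP K) (hq₁ : incid q l₁) (hq₂ : incid q l₂) (hq : mult L q = 2) :
    False := by
  have hqp : q ≠ p := fun h => hpl₁ (h ▸ hq₁)
  obtain ⟨l, hl, hpl, hql⟩ := hp.2 q hq.ge hqp
  rcases eq_or_eq_of_mult_eq_two hq hl₁ hl₂ hne hq₁ hq₂ hl hql with rfl | rfl
  · exact hpl₁ hpl
  · exact hpl₂ hpl
end

section
/- Let n ≥ 2 and let ε = e^{2πi/n} be a primitive n-th root of unity. If 1 ≤ i, j ≤ n satisfy ε^{i−1}(ε + 1) = ε^{j−1} + 1, then either (j = 2 and i = 1) or (j = n and i = n). -/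
/-!
Taking norms in `ε^(i-1) (ε + 1) = ε^(j-1) + 1` gives `‖ε + 1‖ = ‖ε^(j-1) + 1‖`. On the unit
circle `‖w + 1‖² = 2 + 2 Re w`, so `ε^(j-1)` has the real part of `ε` and is therefore `ε` or
`ε⁻¹ = conj ε`, i.e. `j = 2` or `j = n`. Cancelling `ε + 1` then leaves `ε^(i-1) = 1` resp.
`ε^(i-1) = ε⁻¹`. The cancellation fails only for `ε = -1`, i.e. `n = 2`, which is checked by hand.
-/

open Complex

namespace Complex

theorem re_eq_of_norm_add_one_eq {z w : ℂ} (hz : ‖z‖ = 1) (hw : ‖w‖ = 1)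
    (h : ‖w + 1‖ = ‖z + 1‖) : w.re = z.re := by
  have hsq : normSq (w + 1) = normSq (z + 1) := by
    rw [← Complex.sq_norm, ← Complex.sq_norm, h]
  have hz' : normSq z = 1 := by rw [← Complex.sq_norm, hz, one_pow]
  have hw' : normSq w = 1 := by rw [← Complex.sq_norm, hw, one_pow]
  simp only [normSq_add, hz', hw', map_one, mul_one] at hsq
  linarith

theorem eq_or_eq_inv_of_norm_add_one_eq {z w : ℂ} (hz : ‖z‖ = 1) (hw : ‖w‖ = 1)
    (h : ‖w + 1‖ = ‖z + 1‖) : w = z ∨ w = z⁻¹ := by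
  have hre := re_eq_of_norm_add_one_eq hz hw h
  have him : w.im ^ 2 = z.im ^ 2 := by
    have hnorm : normSq w = normSq z := by rw [← Complex.sq_norm, ← Complex.sq_norm, hz, hw]
    rw [normSq_apply, normSq_apply, hre] at hnorm
    linarith
  rw [inv_eq_conj hz]
  rcases sq_eq_sq_iff_eq_or_eq_neg.1 him with him | him
  · exact Or.inl (ext hre him)
  · exact Or.inr (ext hre (by rw [him, conj_im]))

end Complex

namespace IsPrimitiveRoot

theorem pow_pred_eq_inv {M : Type*} [DivisionCommMonoid M] {ζ : M} {n : ℕ}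
    (hζ : IsPrimitiveRoot ζ n) (hn : n ≠ 0) : ζ ^ (n - 1) = ζ⁻¹ :=
  eq_inv_of_mul_eq_one_left <| by
    rw [← pow_succ, Nat.sub_add_cancel (Nat.one_le_iff_ne_zero.2 hn), hζ.pow_eq_one]

theorem eq_of_pow_mul_add_one_eq_pow_add_one {ζ : ℂ} {n : ℕ} (hζ : IsPrimitiveRoot ζ n)
    (hn : 1 < n) {a b : ℕ} (ha : a < n) (hb : b < n) (h : ζ ^ a * (ζ + 1) = ζ ^ b + 1) :
    (b = 1 ∧ a = 0) ∨ (b = n - 1 ∧ a = n - 1) := by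
  by_cases hζ1 : ζ + 1 = 0
  · obtain rfl : ζ = -1 := eq_neg_of_add_eq_zero_left hζ1
    obtain rfl := hζ.unique (IsPrimitiveRoot.neg_one 0 two_ne_zero.symm)
    interval_cases a <;> interval_cases b <;> revert h <;> norm_num
  have hunit : ‖ζ‖ = 1 := hζ.norm'_eq_one (by omega)
  have hnorm : ‖ζ ^ b + 1‖ = ‖ζ + 1‖ := by rw [← h, norm_mul, norm_pow, hunit, one_pow, one_mul]
  rcases eq_or_eq_inv_of_norm_add_one_eq hunit (by rw [norm_pow, hunit, one_pow]) hnorm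
    with hb' | hb'
  · left
    refine ⟨hζ.pow_inj hb hn (by rwa [pow_one]), hζ.pow_inj ha (by omega) ?_⟩
    rw [pow_zero]
    exact mul_right_cancel₀ hζ1 (by rw [h, hb', one_mul])
  · right
    rw [← hζ.pow_pred_eq_inv (by omega)] at hb'
    refine ⟨hζ.pow_inj hb (by omega) hb', hζ.pow_inj ha (by omega) ?_⟩
    refine mul_right_cancel₀ hζ1 ?_
    rw [h, hb', hζ.pow_pred_eq_inv (by omega), mul_add, inv_mul_cancel₀ (hζ.ne_zero (by omega)),
      mul_one, add_comm]

end IsPrimitiveRoot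

/-- for ε = e^{2πi/n} a primitive n-th root of unity (n ≥ 2) and
1 ≤ i, j ≤ n, the equation ε^{i−1}(ε+1) = ε^{j−1}+1 forces (j = 2 and i = 1) or
(j = n and i = n). -/
theorem root_of_unity_equation (n : ℕ) (hn : 2 ≤ n) (ε : ℂ)
    (hε : ε = Complex.exp (2 * Real.pi * Complex.I / n))
    (i j : ℕ) (hi1 : 1 ≤ i) (hin : i ≤ n) (hj1 : 1 ≤ j) (hjn : j ≤ n)
    (h : ε ^ (i - 1) * (ε + 1) = ε ^ (j - 1) + 1) :
    (j = 2 ∧ i = 1) ∨ (j = n ∧ i = n) := by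
  have hε : IsPrimitiveRoot ε n := hε ▸ isPrimitiveRoot_exp n (by omega)
  have := hε.eq_of_pow_mul_add_one_eq_pow_add_one hn (by omega) (by omega) h
  omega
end
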